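/- (Dimension of the top irreducible component.) Fix integers m ≥ 2 and k ≥ 1. The kernel of the restricted lowering map L_k : End(P_k) → End(P_{k−1}) has dimension satisfying (m−1) · dim_ℂ ker(L_k) = (2k+m−1) · C(k+m−2, k)². Equivalently, dim_ℂ ker(L_k) = ((2k+m−1)/(m−1)) · C(k+m−2, k)², which is the Weyl dimension of the top irreducible U(m)-component λ_k^{(k)} of the k-photon operator space. -/

import Mathlib

set_option maxHeartbeats 2000000
set_option synthInstance.maxHeartbeats 2000000

open MvPolynomial

noncomputable section

/-- The `k`-photon sector `P_k`: homogeneous polynomials of degree `k` in `m` variables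
(the Bargmann realization of the `m`-mode bosonic Fock space). -/
abbrev P (m k : ℕ) : Submodule ℂ (MvPolynomial (Fin m) ℂ) :=
  homogeneousSubmodule (Fin m) ℂ k

lemma mulX_mem {m d : ℕ} (s : Fin m) {p : MvPolynomial (Fin m) ℂ} (hp : p ∈ P m d) :
    MvPolynomial.X s * p ∈ P m (d + 1) := by
  rw [mem_homogeneousSubmodule] at hp ⊢
  have := (isHomogeneous_X ℂ s).mul hp
  rwa [Nat.add_comm] at this

lemma degree_single_one {m : ℕ} (s : Fin m) : (Finsupp.single s 1).degree = 1 := by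
  rw [Finsupp.degree_apply, Finsupp.support_single_ne_zero _ one_ne_zero, Finset.sum_singleton,
    Finsupp.single_eq_same]

lemma pderiv_mem {m d : ℕ} (s : Fin m) {p : MvPolynomial (Fin m) ℂ}
    (hp : p ∈ P m (d + 1)) : MvPolynomial.pderiv s p ∈ P m d := by
  rw [mem_homogeneousSubmodule] at hp
  rw [as_sum p, map_sum]
  apply Submodule.sum_mem
  intro u hu
  rw [pderiv_monomial]
  by_cases h : u s = 0
  · simp [h]
  · rw [mem_homogeneousSubmodule]
    apply isHomogeneous_monomial
    have hle : Finsupp.single s 1 ≤ u :=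
      Finsupp.single_le_iff.mpr (Nat.one_le_iff_ne_zero.mpr h)
    have hsum : (u - Finsupp.single s 1) + Finsupp.single s 1 = u :=
      tsub_add_cancel_of_le hle
    have hdeg : u.degree = d + 1 := by
      have hc : coeff u p ≠ 0 := (mem_support_iff).mp hu
      have := hp hc
      rwa [Finsupp.degree_eq_weight_one]
    have hadd : (u - Finsupp.single s 1).degree + (Finsupp.single s 1).degree = u.degree := by
      simp_rw [Finsupp.degree_eq_weight_one]
      rw [← map_add, hsum]
    rw [degree_single_one] at hadd
    omega

instance instACG (m k : ℕ) : AddCommGroup (Module.End ℂ (P m k)) :=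
  LinearMap.addCommGroup

instance instMod (m k : ℕ) : Module ℂ (Module.End ℂ (P m k)) := inferInstance

/-- Multiplication by `x_s` as a linear map `P_d → P_{d+1}`. -/
def xRes (m d : ℕ) (s : Fin m) : P m d →ₗ[ℂ] P m (d + 1) :=
  (LinearMap.mulLeft ℂ (MvPolynomial.X s)).restrict fun _q hq => mulX_mem s hq

/-- The partial derivative `∂_s` as a linear map `P_{d+1} → P_d`. -/
def dRes (m d : ℕ) (s : Fin m) : P m (d + 1) →ₗ[ℂ] P m d :=
  (MvPolynomial.pderiv s).toLinearMap.restrict fun _q hq => pderiv_mem s hq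

/-- The restricted lowering map `L_{d+1} : End(P_{d+1}) → End(P_d)`,
`T ↦ Σ_s ∂_s ∘ T ∘ x_s`. -/
def Lres (m d : ℕ) :
    Module.End ℂ (P m (d + 1)) →ₗ[ℂ] Module.End ℂ (P m d) where
  toFun T := ∑ s, dRes m d s ∘ₗ T ∘ₗ xRes m d s
  map_add' T T' := by
    rw [← Finset.sum_add_distrib]
    exact Finset.sum_congr rfl fun s _ => by
      rw [LinearMap.add_comp, LinearMap.comp_add]
  map_smul' c T := by
    simp [Finset.smul_sum, LinearMap.smul_comp, LinearMap.comp_smul]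

/-- The restricted raising map `R_{d+1} : End(P_d) → End(P_{d+1})`,
`T ↦ Σ_s x_s ∘ T ∘ ∂_s`. -/
def Rres (m d : ℕ) :
    Module.End ℂ (P m d) →ₗ[ℂ] Module.End ℂ (P m (d + 1)) where
  toFun T := ∑ s, xRes m d s ∘ₗ T ∘ₗ dRes m d s
  map_add' T T' := by
    rw [← Finset.sum_add_distrib]
    exact Finset.sum_congr rfl fun s _ => by
      rw [LinearMap.add_comp, LinearMap.comp_add]
  map_smul' c T := by
    simp [Finset.smul_sum, LinearMap.smul_comp, LinearMap.comp_smul]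

end

/-!
Write `L_k`, `R_k` for the lowering and raising maps. The commutation relation
`∂_s x_t = x_t ∂_s + δ_st` and Euler's identity `Σ_s x_s ∂_s = k` on `P_k` give
`L_{k+1} R_{k+1} = (m + 2k) + R_k L_k` on `End(P_k)` for `k ≥ 1`, and `L_1 R_1 = m` on `End(P_0)`.
Since `a + R L` is injective whenever `a ≠ 0` and `a + L R` is, induction shows that every
`L_k R_k` is injective. Hence `L_k` is onto, `dim ker L_k = C(k+m-1,k)² - C(k+m-2,k-1)²`, and
Pascal's rule turns this into the stated formula.
-/

theorem MvPolynomial.finrank_homogeneousSubmodule {σ K : Type*} [Field K] [Finite σ] (n : ℕ) :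
    Module.finrank K (homogeneousSubmodule σ K n) = (Nat.card σ + n - 1).choose n := by
  classical
  rw [homogeneousSubmodule_eq_finsupp_supported, ← restrictSupport,
    Module.finrank_eq_nat_card_basis (basisRestrictSupport K _), ← Sym.natCard_sym_eq_choose]
  exact Nat.card_congr (Sym.equivNatSum σ n).symm

instance MvPolynomial.finite_homogeneousSubmodule {σ R : Type*} [CommSemiring R] [Finite σ]
    (n : ℕ) : Module.Finite R (homogeneousSubmodule σ R n) :=
  Module.Finite.iff_fg.mpr (homogeneousSubmodule_fg σ R n)

theorem LinearMap.injective_smul_id_add_comp_of_injective {K V W : Type*} [Field K]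
    [AddCommGroup V] [Module K V] [AddCommGroup W] [Module K W] (f : V →ₗ[K] W)
    (g : W →ₗ[K] V) {a : K} (ha : a ≠ 0)
    (h : Function.Injective (a • LinearMap.id + f ∘ₗ g : W →ₗ[K] W)) :
    Function.Injective (a • LinearMap.id + g ∘ₗ f : V →ₗ[K] V) := by
  rw [← LinearMap.ker_eq_bot, LinearMap.ker_eq_bot'] at h ⊢
  intro v hv
  have hfv : f v = 0 := h (f v) (by simpa [smul_add] using congrArg f hv)
  simpa [hfv, ha] using hv

theorem Nat.succ_mul_choose_sq (a b : ℕ) :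
    (b + 1) * (a + b + 2).choose (a + 1) ^ 2
      = (b + 1) * (a + b + 1).choose a ^ 2 + (2 * a + b + 3) * (a + b + 1).choose (a + 1) ^ 2 := by
  have hpascal : (a + b + 2).choose (a + 1) = (a + b + 1).choose a + (a + b + 1).choose (a + 1) :=
    Nat.choose_succ_succ _ _
  have hratio : (b + 1) * (a + b + 1).choose a = (a + 1) * (a + b + 1).choose (a + 1) := by
    have := Nat.choose_succ_right_eq (a + b + 1) a
    rw [show a + b + 1 - a = b + 1 by omega] at this
    linarith
  rw [hpascal]
  nlinarith [hratio]

section LoweringRaising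

variable {m : ℕ}

lemma finrank_P (k : ℕ) : Module.finrank ℂ (P m k) = (m + k - 1).choose k := by
  rw [finrank_homogeneousSubmodule, Nat.card_eq_fintype_card, Fintype.card_fin]

lemma finrank_End_P (k : ℕ) :
    Module.finrank ℂ (Module.End ℂ (P m k)) = ((m + k - 1).choose k) ^ 2 := by
  rw [Module.finrank_linearMap, finrank_P, sq]

lemma Lres_apply (d : ℕ) (T : Module.End ℂ (P m (d + 1))) :
    Lres m d T = ∑ s, dRes m d s ∘ₗ T ∘ₗ xRes m d s := rfl

lemma Rres_apply (d : ℕ) (T : Module.End ℂ (P m d)) :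
    Rres m d T = ∑ s, xRes m d s ∘ₗ T ∘ₗ dRes m d s := rfl

@[simp]
lemma coe_xRes (d : ℕ) (s : Fin m) (p : P m d) :
    (xRes m d s p : MvPolynomial (Fin m) ℂ) = X s * (p : MvPolynomial (Fin m) ℂ) := rfl

@[simp]
lemma coe_dRes (d : ℕ) (s : Fin m) (p : P m (d + 1)) :
    (dRes m d s p : MvPolynomial (Fin m) ℂ) = pderiv s (p : MvPolynomial (Fin m) ℂ) := rfl

lemma dRes_comp_xRes (e : ℕ) (s t : Fin m) :
    dRes m (e + 1) s ∘ₗ xRes m (e + 1) t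
      = xRes m e t ∘ₗ dRes m e s + if s = t then LinearMap.id else 0 := by
  ext p : 1
  apply Subtype.ext
  rcases eq_or_ne s t with rfl | hst <;> simp [*]

lemma dRes_zero_comp_xRes (s t : Fin m) :
    dRes m 0 s ∘ₗ xRes m 0 t = if s = t then LinearMap.id else 0 := by
  ext p : 1
  apply Subtype.ext
  have hc := totalDegree_eq_zero_iff_eq_C.mp ((totalDegree_zero_iff_isHomogeneous _).mpr p.2)
  have hp : ∀ i, pderiv i (p : MvPolynomial (Fin m) ℂ) = 0 := fun i => by rw [hc, pderiv_C]
  rcases eq_or_ne s t with rfl | hst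
  · simp [hp]
  · simp [hp, hst]

lemma sum_xRes_comp_dRes (e : ℕ) :
    ∑ s, xRes m e s ∘ₗ dRes m e s = ((e + 1 : ℕ) : ℂ) • LinearMap.id := by
  ext p : 1
  apply Subtype.ext
  simp only [LinearMap.sum_apply, LinearMap.comp_apply, Submodule.coe_sum,
    coe_xRes, coe_dRes, LinearMap.smul_apply, LinearMap.id_apply, Nat.cast_smul_eq_nsmul,
    Submodule.coe_smul_of_tower, ((mem_homogeneousSubmodule _ _).mp p.2).sum_X_mul_pderiv]

lemma Lres_Rres_apply (d : ℕ) (T : Module.End ℂ (P m d)) :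
    Lres m d (Rres m d T)
      = ∑ s, ∑ t, (dRes m d s ∘ₗ xRes m d t) ∘ₗ T ∘ₗ (dRes m d t ∘ₗ xRes m d s) := by
  ext p : 1
  simp only [Rres_apply, map_sum, Lres_apply, LinearMap.sum_apply, LinearMap.coe_comp,
    Function.comp_apply]
  exact Finset.sum_comm

lemma Rres_Lres_apply (e : ℕ) (T : Module.End ℂ (P m (e + 1))) :
    Rres m e (Lres m e T)
      = ∑ s, ∑ t, (xRes m e t ∘ₗ dRes m e s) ∘ₗ T ∘ₗ (xRes m e s ∘ₗ dRes m e t) := by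
  ext p : 1
  simp [Lres_apply, Rres_apply, LinearMap.sum_apply, map_sum]

lemma Lres_comp_Rres_zero : Lres m 0 ∘ₗ Rres m 0 = (m : ℂ) • LinearMap.id := by
  ext1 T
  have hterm (s t : Fin m) :
      (dRes m 0 s ∘ₗ xRes m 0 t) ∘ₗ T ∘ₗ (dRes m 0 t ∘ₗ xRes m 0 s) = if s = t then T else 0 := by
    rcases eq_or_ne s t with rfl | hst <;> simp [dRes_zero_comp_xRes, *, Ne.symm]
  simp [Lres_Rres_apply, hterm, Nat.cast_smul_eq_nsmul]

lemma Lres_comp_Rres_succ (e : ℕ) :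
    Lres m (e + 1) ∘ₗ Rres m (e + 1)
      = ((m + 2 * (e + 1) : ℕ) : ℂ) • LinearMap.id + Rres m e ∘ₗ Lres m e := by
  ext1 T
  have hterm (s t : Fin m) :
      (dRes m (e + 1) s ∘ₗ xRes m (e + 1) t) ∘ₗ T ∘ₗ (dRes m (e + 1) t ∘ₗ xRes m (e + 1) s)
        = (xRes m e t ∘ₗ dRes m e s) ∘ₗ T ∘ₗ (xRes m e s ∘ₗ dRes m e t)
          + if s = t then (xRes m e s ∘ₗ dRes m e s) * T + T * (xRes m e s ∘ₗ dRes m e s) + T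
            else 0 := by
    rw [dRes_comp_xRes, dRes_comp_xRes]
    rcases eq_or_ne s t with rfl | hst
    · simp only [if_true, LinearMap.comp_add, LinearMap.add_comp, Module.End.mul_eq_comp,
        LinearMap.id_comp, LinearMap.comp_id]
      abel
    · simp [hst, hst.symm]
  calc Lres m (e + 1) (Rres m (e + 1) T)
      = Rres m e (Lres m e T) + ((∑ s, xRes m e s ∘ₗ dRes m e s) * T
          + T * (∑ s, xRes m e s ∘ₗ dRes m e s) + m • T) := by
        simp [Lres_Rres_apply, hterm, Finset.sum_add_distrib, Rres_Lres_apply, Finset.sum_mul,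
          Finset.mul_sum]
    _ = _ := by
        rw [sum_xRes_comp_dRes, Module.End.one_eq_id.symm, smul_one_mul, mul_smul_one]
        simp only [LinearMap.add_apply, LinearMap.smul_apply, LinearMap.comp_apply,
          LinearMap.id_apply]
        rw [← Nat.cast_smul_eq_nsmul ℂ]
        push_cast
        module

lemma injective_smul_add_Lres_comp_Rres (hm : 0 < m) (d a : ℕ) :
    Function.Injective
      ((a : ℂ) • LinearMap.id + Lres m d ∘ₗ Rres m d : Module.End ℂ (Module.End ℂ (P m d))) := by
  induction d generalizing a with
  | zero =>
    rw [Lres_comp_Rres_zero, ← add_smul]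
    exact smul_right_injective _ (show (a + m : ℂ) ≠ 0 by exact_mod_cast (by omega : a + m ≠ 0))
  | succ e ih =>
    rw [Lres_comp_Rres_succ, ← add_assoc, ← add_smul]
    exact_mod_cast LinearMap.injective_smul_id_add_comp_of_injective _ _
      (Nat.cast_ne_zero.mpr (by omega)) (ih (a + (m + 2 * (e + 1))))

lemma Lres_surjective (hm : 0 < m) (d : ℕ) : Function.Surjective (Lres m d) := by
  have hinj : Function.Injective (Lres m d ∘ₗ Rres m d) := by
    simpa using injective_smul_add_Lres_comp_Rres hm d 0
  have hsurj := LinearMap.injective_iff_surjective.mp hinj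
  rw [LinearMap.coe_comp] at hsurj
  exact hsurj.of_comp

lemma finrank_ker_Lres_add (hm : 0 < m) (d : ℕ) :
    Module.finrank ℂ (LinearMap.ker (Lres m d)) + ((m + d - 1).choose d) ^ 2
      = ((m + (d + 1) - 1).choose (d + 1)) ^ 2 := by
  have := (Lres m d).finrank_range_add_finrank_ker
  rw [LinearMap.range_eq_top.mpr (Lres_surjective hm d), finrank_top, finrank_End_P,
    finrank_End_P] at this
  omega

end LoweringRaising

/-- Dimension of the top irreducible component. For `m ≥ 2` and
`k ≥ 1` (here `k = j + 1`), the kernel of the restricted lowering map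
`L_k : End(P_k) → End(P_{k−1})` satisfies
`(m−1) · dim ker(L_k) = (2k+m−1) · C(k+m−2, k)²`, i.e. `dim ker(L_k)` is the Weyl
dimension of the top irreducible `U(m)`-component `λ_k^{(k)}` of the `k`-photon
operator space. -/
theorem stmt16 (m j : ℕ) (hm : 2 ≤ m) :
    (m - 1) * Module.finrank ℂ (LinearMap.ker (Lres m j))
      = (2 * (j + 1) + m - 1) * (((j + 1) + m - 2).choose (j + 1)) ^ 2 := by
  obtain ⟨n, rfl⟩ : ∃ n, m = n + 2 := ⟨m - 2, by omega⟩
  have hker := finrank_ker_Lres_add (m := n + 2) (by omega) j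
  have hchoose := Nat.succ_mul_choose_sq j n
  rw [show n + 2 + j - 1 = j + n + 1 by omega, show n + 2 + (j + 1) - 1 = j + n + 2 by omega]
    at hker
  rw [show n + 2 - 1 = n + 1 by omega, show 2 * (j + 1) + (n + 2) - 1 = 2 * j + n + 3 by omega,
    show j + 1 + (n + 2) - 2 = j + n + 1 by omega]
  rw [← hker, mul_add] at hchoose
  omega
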